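/- Let F be a perfect analytic field of characteristic p, z ∈ W(o_F) primitive, and x, y ∈ W(o_F) stable and congruent modulo z. Then the zeroth Teichmüller coordinates of x and y have the same norm: |x̄_0|' = |ȳ_0|'. -/

import Mathlib

open scoped NNReal ENNReal

set_option synthInstance.maxHeartbeats 1000000
set_option maxHeartbeats 1000000

/-- The valuation ring `o_F` of an analytic field `F` (a field complete with respect to a
multiplicative nonarchimedean norm, given by a rank-one valuation). -/
noncomputable abbrev OK (F : Type*) [Field F] [Valued F ℝ≥0] : Subring F :=
  Valued.v.integer

/-- The norm `|x̄_n|'` of the `n`-th Teichmüller coordinate of a Witt vector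
`x = Σ pⁿ [x̄_n] ∈ W(o_F)` over a perfect field: since `x̄_n = (x.coeff n)^(p⁻ⁿ)`,
this is `|x.coeff n|'^(p⁻ⁿ)`. -/
noncomputable def tcNorm (p : ℕ) [Fact p.Prime] (F : Type*) [Field F] [Valued F ℝ≥0]
    (x : WittVector p (OK F)) (n : ℕ) : ℝ≥0 :=
  Valued.v ((x.coeff n : OK F) : F) ^ ((((p : ℝ))⁻¹ ^ n : ℝ))

/-- A Witt vector `x = Σ pⁿ [x̄_n] ∈ W(o_F)` is stable if `|x̄_n|' ≤ |x̄_0|'`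
for all `n > 0`. -/
def IsStable (p : ℕ) [Fact p.Prime] (F : Type*) [Field F] [Valued F ℝ≥0]
    (x : WittVector p (OK F)) : Prop :=
  ∀ n : ℕ, 0 < n → tcNorm p F x n ≤ tcNorm p F x 0

/-- A Witt vector `z = Σ pⁿ [z̄_n] ∈ W(o_F)` is primitive if `|z̄_0|' = p⁻¹` and
`|z̄_1|' = 1`; in terms of Witt coordinates, `|z.coeff 0|' = p⁻¹` and `|z.coeff 1|' = 1`. -/
def IsPrimitive (p : ℕ) [Fact p.Prime] (F : Type*) [Field F] [Valued F ℝ≥0]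
    (z : WittVector p (OK F)) : Prop :=
  Valued.v ((z.coeff 0 : OK F) : F) = (p : ℝ≥0)⁻¹ ∧
  Valued.v ((z.coeff 1 : OK F) : F) = 1

/-
Over a ring of characteristic `p`, `([c] * y).coeff n = c ^ p ^ n * y.coeff n`, so stability of `x`
says exactly that `[x₀] ∣ x`. If `|y₀| < |x₀|`, then `x - y` is again stable, with leading
coefficient `x₀ - y₀ ≠ 0`, and it is a multiple `z * w`. But a stable multiple `ζ * ω` of an
element with `|ζ₀| < 1` and `|ζ₁| = 1` has `ω₀ = 0`. Writing `ζ * ω = [ζ₀ ω₀] * m`,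
`ω = [ω₀] + V ω'` and comparing the parts divisible by `V` gives
`F ζ * ω' = [ω₀ ^ p] * u` with `u₀ = ζ₀ ^ p m₁ - ζ₁` a unit. Hence `F ζ * ω'` is again stable,
`F ζ` satisfies the same hypotheses as `ζ`, and `|ω₀| ^ p = |ζ₀| ^ p |ω'₀|`; iterating gives
`|ω₀| ≤ |ζ₀| ^ n` for every `n`.
-/

theorem ExpChar.charP_of_prime {R : Type*} [Semiring R] {p : ℕ} [ExpChar R p] (hp : p.Prime) :
    CharP R p := by
  cases ‹ExpChar R p›
  exacts [absurd hp Nat.not_prime_one, ‹_›]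

theorem Valuation.isUnit_sub_of_lt_one {K Γ₀ : Type*} [Field K] [LinearOrderedCommGroupWithZero Γ₀]
    {v : Valuation K Γ₀} {a b : v.integer} (ha : v a < 1) (hb : v b = 1) : IsUnit (a - b) :=
  (integer.integers v).isUnit_of_one' ((map_sub_eq_of_lt_right _ (hb ▸ ha)).trans hb)

namespace WittVector

section CommRing

variable {p : ℕ} [Fact p.Prime] {R : Type*} [CommRing R]

theorem sub_coeff_zero (x y : WittVector p R) : (x - y).coeff 0 = x.coeff 0 - y.coeff 0 :=
  map_sub constantCoeff x y

theorem teichmuller_add_verschiebung_shift (x : WittVector p R) :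
    teichmuller p (x.coeff 0) + verschiebung (x.shift 1) = x := by
  have disjoint : ∀ n, (teichmuller p (x.coeff 0)).coeff n = 0 ∨
      (verschiebung (x.shift 1)).coeff n = 0 := by
    rintro (_ | n)
    · exact .inr (verschiebung_coeff_zero _)
    · exact .inl (teichmuller_coeff_pos p _ _ n.succ_pos)
  ext (_ | n)
  · simp [coeff_add_of_disjoint _ _ _ disjoint]
  · simp [coeff_add_of_disjoint _ _ _ disjoint, teichmuller_coeff_pos, shift_coeff, add_comm]

theorem verschiebung_shift_eq_sub_teichmuller (x : WittVector p R) :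
    verschiebung (x.shift 1) = x - teichmuller p (x.coeff 0) :=
  eq_sub_of_add_eq' (teichmuller_add_verschiebung_shift x)

theorem teichmuller_coeff_zero_dvd_teichmuller_mul (c : R) {u : WittVector p R}
    (hu : IsUnit (u.coeff 0)) :
    teichmuller p ((teichmuller p c * u).coeff 0) ∣ teichmuller p c * u := by
  rw [mul_coeff_zero, teichmuller_coeff_zero, map_mul]
  exact mul_dvd_mul_left _ (hu.map (teichmuller p)).dvd

variable [CharP R p]

theorem frobenius_teichmuller (c : R) :
    frobenius (teichmuller p c) = teichmuller p (c ^ p) := by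
  rw [frobenius_eq_map_frobenius, map_teichmuller, frobenius_def]

theorem teichmuller_mul_verschiebung (c : R) (u : WittVector p R) :
    teichmuller p c * verschiebung u = verschiebung (teichmuller p (c ^ p) * u) := by
  rw [mul_comm (teichmuller p _), ← frobenius_teichmuller, ← verschiebung_mul_frobenius,
    mul_comm u]

theorem shift_one_teichmuller_mul (c : R) (x : WittVector p R) :
    (teichmuller p c * x).shift 1 = teichmuller p (c ^ p) * x.shift 1 := by
  apply verschiebung_injective
  rw [verschiebung_shift_eq_sub_teichmuller, ← teichmuller_mul_verschiebung,
    verschiebung_shift_eq_sub_teichmuller, mul_coeff_zero, teichmuller_coeff_zero, map_mul,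
    mul_sub]

theorem teichmuller_mul_coeff (c : R) (x : WittVector p R) (n : ℕ) :
    (teichmuller p c * x).coeff n = c ^ p ^ n * x.coeff n := by
  induction n generalizing c x with
  | zero => rw [mul_coeff_zero, teichmuller_coeff_zero, pow_zero, pow_one]
  | succ n ih =>
    rw [add_comm n 1, ← shift_coeff, shift_one_teichmuller_mul, ih, shift_coeff, ← pow_mul,
      pow_add, pow_one]

theorem teichmuller_dvd_of_pow_dvd_coeff {c : R} {x : WittVector p R}
    (h : ∀ n, c ^ p ^ n ∣ x.coeff n) : teichmuller p c ∣ x := by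
  choose y hy using h
  exact ⟨mk p y, ext fun n => by rw [teichmuller_mul_coeff, coeff_mk, hy]⟩

theorem frobenius_mul_shift_one_eq {ζ ω m : WittVector p R}
    (h : ζ * ω = teichmuller p (ζ.coeff 0 * ω.coeff 0) * m) :
    frobenius ζ * ω.shift 1 =
      teichmuller p (ω.coeff 0 ^ p) * (teichmuller p (ζ.coeff 0 ^ p) * m.shift 1 - ζ.shift 1) := by
  have hm : ζ.coeff 0 * ω.coeff 0 * m.coeff 0 = ζ.coeff 0 * ω.coeff 0 := by
    simpa [mul_coeff_zero] using (congrArg (·.coeff 0) h).symm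
  apply verschiebung_injective
  rw [mul_comm, verschiebung_mul_frobenius, ← teichmuller_mul_verschiebung, map_sub,
    ← teichmuller_mul_verschiebung, verschiebung_shift_eq_sub_teichmuller,
    verschiebung_shift_eq_sub_teichmuller, verschiebung_shift_eq_sub_teichmuller]
  replace hm := congrArg (teichmuller p) hm
  simp only [map_mul] at h hm
  linear_combination h + hm

end CommRing

variable {p : ℕ} [hp : Fact p.Prime] {F : Type*} [Field F] [Valued F ℝ≥0]

theorem teichmuller_coeff_zero_dvd_sub {x y : WittVector p (OK F)}
    (hx : teichmuller p (x.coeff 0) ∣ x) (hy : teichmuller p (y.coeff 0) ∣ y)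
    (hlt : Valued.v (y.coeff 0 : F) < Valued.v (x.coeff 0 : F)) :
    teichmuller p ((x - y).coeff 0) ∣ x - y := by
  have hv : Valued.v ((x - y).coeff 0 : F) = Valued.v (x.coeff 0 : F) := by
    rw [sub_coeff_zero]
    push_cast
    exact Valuation.map_sub_eq_of_lt_left _ hlt
  have hdx : (x - y).coeff 0 ∣ x.coeff 0 := (Valuation.integer.integers _).dvd_of_le hv.ge
  have hxy : x.coeff 0 ∣ y.coeff 0 := (Valuation.integer.integers _).dvd_of_le hlt.le
  exact dvd_sub ((map_dvd _ hdx).trans hx) ((map_dvd _ (hdx.trans hxy)).trans hy)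

theorem valuation_coeff_zero_teichmuller_mul (c : OK F) {u : WittVector p (OK F)}
    (hu : IsUnit (u.coeff 0)) :
    Valued.v ((teichmuller p c * u).coeff 0 : F) = Valued.v (c : F) := by
  have hv : Valued.v (u.coeff 0 : F) = 1 := (Valuation.integer.integers _).one_of_isUnit hu
  rw [mul_coeff_zero, teichmuller_coeff_zero]
  push_cast
  rw [map_mul, hv, mul_one]

variable [CharP F p]

theorem valuation_coeff_frobenius (ζ : WittVector p (OK F)) (n : ℕ) :
    Valued.v ((frobenius ζ).coeff n : F) = Valued.v (ζ.coeff n : F) ^ p := by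
  rw [coeff_frobenius_charP]
  push_cast
  rw [map_pow]

theorem exists_frobenius_mul_shift_one_eq_teichmuller_mul {ζ ω : WittVector p (OK F)}
    (hζ₀ : Valued.v (ζ.coeff 0 : F) < 1) (hζ₁ : Valued.v (ζ.coeff 1 : F) = 1)
    (h : teichmuller p ((ζ * ω).coeff 0) ∣ ζ * ω) :
    ∃ u : WittVector p (OK F), IsUnit (u.coeff 0) ∧
      frobenius ζ * ω.shift 1 = teichmuller p (ω.coeff 0 ^ p) * u := by
  obtain ⟨m, hm⟩ := h
  rw [mul_coeff_zero] at hm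
  refine ⟨_, ?_, frobenius_mul_shift_one_eq hm⟩
  rw [sub_coeff_zero, mul_coeff_zero, teichmuller_coeff_zero, shift_coeff, shift_coeff]
  refine Valuation.isUnit_sub_of_lt_one ?_ hζ₁
  push_cast
  rw [map_mul, map_pow]
  calc Valued.v (ζ.coeff 0 : F) ^ p * Valued.v (m.coeff 1 : F)
      ≤ Valued.v (ζ.coeff 0 : F) ^ p * 1 := by gcongr; exact (m.coeff 1).2
    _ < 1 := by rw [mul_one]; exact pow_lt_one₀ zero_le hζ₀ hp.out.ne_zero

theorem valuation_coeff_zero_le_pow {ζ ω : WittVector p (OK F)}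
    (hζ₀ : Valued.v (ζ.coeff 0 : F) < 1) (hζ₁ : Valued.v (ζ.coeff 1 : F) = 1)
    (h : teichmuller p ((ζ * ω).coeff 0) ∣ ζ * ω) (n : ℕ) :
    Valued.v (ω.coeff 0 : F) ≤ Valued.v (ζ.coeff 0 : F) ^ n := by
  induction n generalizing ζ ω with
  | zero => exact (ω.coeff 0).2
  | succ n ih =>
    obtain ⟨u, hu, key⟩ := exists_frobenius_mul_shift_one_eq_teichmuller_mul hζ₀ hζ₁ h
    have hdvd : teichmuller p ((frobenius ζ * ω.shift 1).coeff 0) ∣ frobenius ζ * ω.shift 1 := by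
      rw [key]
      exact teichmuller_coeff_zero_dvd_teichmuller_mul _ hu
    have hω₁ := ih (by rw [valuation_coeff_frobenius]; exact pow_lt_one₀ zero_le hζ₀ hp.out.ne_zero)
      (by rw [valuation_coeff_frobenius, hζ₁, one_pow]) hdvd
    rw [valuation_coeff_frobenius, shift_coeff, add_zero] at hω₁
    have hv : Valued.v (ω.coeff 0 : F) ^ p =
        Valued.v (ζ.coeff 0 : F) ^ p * Valued.v (ω.coeff 1 : F) := by
      have h₀ := valuation_coeff_zero_teichmuller_mul (ω.coeff 0 ^ p) hu
      rw [← key, mul_coeff_zero, shift_coeff, add_zero] at h₀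
      push_cast at h₀
      rwa [map_mul, map_pow, valuation_coeff_frobenius, eq_comm] at h₀
    refine le_of_pow_le_pow_left₀ hp.out.ne_zero zero_le ?_
    calc Valued.v (ω.coeff 0 : F) ^ p
        = Valued.v (ζ.coeff 0 : F) ^ p * Valued.v (ω.coeff 1 : F) := hv
      _ ≤ Valued.v (ζ.coeff 0 : F) ^ p * (Valued.v (ζ.coeff 0 : F) ^ p) ^ n := by gcongr
      _ = (Valued.v (ζ.coeff 0 : F) ^ (n + 1)) ^ p := by ring

theorem coeff_zero_mul_eq_zero_of_teichmuller_dvd {ζ ω : WittVector p (OK F)}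
    (hζ₀ : Valued.v (ζ.coeff 0 : F) < 1) (hζ₁ : Valued.v (ζ.coeff 1 : F) = 1)
    (h : teichmuller p ((ζ * ω).coeff 0) ∣ ζ * ω) : (ζ * ω).coeff 0 = 0 := by
  suffices hω : ω.coeff 0 = 0 by rw [mul_coeff_zero, hω, mul_zero]
  by_contra hω
  have hpos : 0 < Valued.v (ω.coeff 0 : F) := by
    rw [pos_iff_ne_zero, Valuation.ne_zero_iff]
    exact_mod_cast hω
  obtain ⟨n, hn⟩ := NNReal.exists_pow_lt_of_lt_one hpos hζ₀
  exact (valuation_coeff_zero_le_pow hζ₀ hζ₁ h n).not_gt hn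

end WittVector

open WittVector

section Stable

variable {p : ℕ} [hp : Fact p.Prime] {F : Type*} [Field F] [Valued F ℝ≥0]

theorem IsStable.valuation_coeff_le {x : WittVector p (OK F)} (hx : IsStable p F x) (n : ℕ) :
    Valued.v (x.coeff n : F) ≤ Valued.v (x.coeff 0 : F) ^ p ^ n := by
  rcases n.eq_zero_or_pos with rfl | hn
  · simp
  have h := hx n hn
  rw [tcNorm, tcNorm, pow_zero, NNReal.rpow_one, inv_pow,
    NNReal.rpow_inv_le_iff (pow_pos (Nat.cast_pos.2 hp.out.pos) n)] at h
  exact_mod_cast h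

theorem IsStable.teichmuller_coeff_zero_dvd [CharP F p] {x : WittVector p (OK F)}
    (hx : IsStable p F x) : teichmuller p (x.coeff 0) ∣ x :=
  teichmuller_dvd_of_pow_dvd_coeff fun n => (Valuation.integer.integers _).dvd_of_le <| by
    push_cast
    rw [map_pow]
    exact hx.valuation_coeff_le n

theorem IsStable.valuation_coeff_zero_le_of_dvd_sub [CharP F p] {z x y : WittVector p (OK F)}
    (hz₀ : Valued.v (z.coeff 0 : F) < 1) (hz₁ : Valued.v (z.coeff 1 : F) = 1)
    (hx : IsStable p F x) (hy : IsStable p F y) (hzxy : z ∣ x - y) :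
    Valued.v (x.coeff 0 : F) ≤ Valued.v (y.coeff 0 : F) := by
  by_contra! hlt
  obtain ⟨w, hw⟩ := hzxy
  have hdvd := teichmuller_coeff_zero_dvd_sub hx.teichmuller_coeff_zero_dvd
    hy.teichmuller_coeff_zero_dvd hlt
  rw [hw] at hdvd
  have h₀ := coeff_zero_mul_eq_zero_of_teichmuller_dvd hz₀ hz₁ hdvd
  rw [← hw, sub_coeff_zero, sub_eq_zero] at h₀
  exact hlt.ne (by rw [h₀])

end Stable

theorem stable_congruent_same_norm_general (p : ℕ) [Fact p.Prime] (F : Type*) [Field F]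
    [Valued F ℝ≥0] [ExpChar F p]
    (z x y : WittVector p (OK F)) (hz : IsPrimitive p F z)
    (hx : IsStable p F x) (hy : IsStable p F y) (hcong : z ∣ (x - y)) :
    Valued.v ((x.coeff 0 : OK F) : F) = Valued.v ((y.coeff 0 : OK F) : F) := by
  have hp : p.Prime := Fact.out
  have := ExpChar.charP_of_prime (R := F) hp
  have hz₀ : Valued.v (z.coeff 0 : F) < 1 := by
    rw [hz.1]
    exact inv_lt_one_of_one_lt₀ (by exact_mod_cast hp.one_lt)
  exact le_antisymm (hx.valuation_coeff_zero_le_of_dvd_sub hz₀ hz.2 hy hcong)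
    (hy.valuation_coeff_zero_le_of_dvd_sub hz₀ hz.2 hx (dvd_sub_comm.1 hcong))

/-- If `z ∈ W(o_F)` is primitive and `x, y ∈ W(o_F)` are stable and congruent modulo `z`,
then their zeroth Teichmüller coordinates have the same norm. -/
theorem stable_congruent_same_norm (p : ℕ) [Fact p.Prime] (F : Type*) [Field F]
    [Valued F ℝ≥0] [CompleteSpace F] [ExpChar F p] [PerfectRing F p]
    (z x y : WittVector p (OK F)) (hz : IsPrimitive p F z)
    (hx : IsStable p F x) (hy : IsStable p F y) (hcong : z ∣ (x - y)) :
    Valued.v ((x.coeff 0 : OK F) : F) = Valued.v ((y.coeff 0 : OK F) : F) :=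
  stable_congruent_same_norm_general p F z x y hz hx hy hcong
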